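/- The double kite graph DK(⌊n/3⌋, n − 2⌊n/3⌋ − 2) on n vertices has normalized Laplacian spectral gap λ₁ ≤ (1+o(1))·54/n³ as n → ∞. -/

import Mathlib

open Finset
open scoped Classical

noncomputable section

variable {V : Type*}

/-- Dirichlet energy `∑_{u~v} (f u - f v)^2` (each edge counted once). -/
def SimpleGraph.energyForm [Fintype V] (G : SimpleGraph V) (f : V → ℝ) : ℝ :=
  (1/2) * ∑ x : V, ∑ y : V, if G.Adj x y then (f x - f y)^2 else 0

/-- The weighted norm `∑_x f(x)^2 d(x)`. -/
def SimpleGraph.qForm [Fintype V] (G : SimpleGraph V) (f : V → ℝ) : ℝ :=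
  ∑ x : V, (f x)^2 * (G.degree x : ℝ)

/-- The spectral gap of the normalized Laplacian, via the variational characterization
`λ₁ = inf { R(f) : ∑ f(u) d(u) = 0, f ≢ 0 }`. -/
def SimpleGraph.lambda1 [Fintype V] (G : SimpleGraph V) : ℝ :=
  sInf { r | ∃ f : V → ℝ, (∑ x : V, f x * (G.degree x : ℝ)) = 0 ∧ G.qForm f ≠ 0 ∧
    r = G.energyForm f / G.qForm f }

/-- One-directional edge relation of the double kite graph `DK(r,s)`:
two copies of `K_r` joined by a path with `s` internal vertices. -/
def DKrel (r s : ℕ) : (Fin r ⊕ (Fin s ⊕ Fin r)) → (Fin r ⊕ (Fin s ⊕ Fin r)) → Prop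
  | Sum.inl a, Sum.inl b => a < b
  | Sum.inr (Sum.inr a), Sum.inr (Sum.inr b) => a < b
  | Sum.inl a, Sum.inr (Sum.inl j) => a.val = 0 ∧ j.val = 0
  | Sum.inr (Sum.inl i), Sum.inr (Sum.inl j) => (j : ℕ) = (i : ℕ) + 1
  | Sum.inr (Sum.inl i), Sum.inr (Sum.inr b) => (i : ℕ) + 1 = s ∧ b.val = 0
  | Sum.inl a, Sum.inr (Sum.inr b) => s = 0 ∧ a.val = 0 ∧ b.val = 0
  | _, _ => False

/-- The double kite graph `DK(r,s)`: two copies of `K_r` joined by a path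
`p₀, p₁, …, p_s, p_{s+1}` whose endpoints lie in the two cliques. -/
def doubleKite (r s : ℕ) : SimpleGraph (Fin r ⊕ (Fin s ⊕ Fin r)) where
  Adj x y := DKrel r s x y ∨ DKrel r s y x
  symm := ⟨fun _ _ (h : _ ∨ _) => h.symm⟩
  loopless := ⟨by
    rintro (a | j | b) h <;>
      simp only [DKrel, lt_self_iff_false, or_self] at h <;> omega⟩

/-! The test function equal to `1` on one clique, `-1` on the other and interpolating linearly
along the path is exchanged with its negative by the automorphism swapping the two ends, so it is
orthogonal to the degree vector. Only the `s + 1` path edges contribute to its energy, each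
`(2 / (s + 1))²`, while each of the `2r` clique vertices contributes at least `r - 1` to its
weighted norm. Hence `λ₁ ≤ 2 / ((s + 1) r (r - 1))`, which is `(1 + o(1)) · 54 / n³` when
`r` and `s` are both about `n / 3`. -/

namespace SimpleGraph

variable [Fintype V] (G : SimpleGraph V)

lemma energyForm_nonneg (f : V → ℝ) : 0 ≤ G.energyForm f := by
  unfold energyForm
  positivity

lemma qForm_nonneg (f : V → ℝ) : 0 ≤ G.qForm f := by
  unfold qForm
  positivity

lemma lambda1_le_energyForm_div_qForm (f : V → ℝ) (hf : ∑ x, f x * (G.degree x : ℝ) = 0)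
    (hq : G.qForm f ≠ 0) : G.lambda1 ≤ G.energyForm f / G.qForm f := by
  refine csInf_le ⟨0, ?_⟩ ⟨f, hf, hq, rfl⟩
  rintro _ ⟨g, -, -, rfl⟩
  exact div_nonneg (G.energyForm_nonneg g) (G.qForm_nonneg g)

lemma energyForm_eq_sum_of_adj_iff {R : V → V → Prop} (hR : ∀ x y, R x y → ¬R y x)
    (hadj : ∀ x y, G.Adj x y ↔ R x y ∨ R y x) (f : V → ℝ) :
    G.energyForm f = ∑ x, ∑ y, if R x y then (f x - f y) ^ 2 else 0 := by
  have hsplit (x y : V) : (if G.Adj x y then (f x - f y) ^ 2 else 0) =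
      (if R x y then (f x - f y) ^ 2 else 0) + (if R y x then (f y - f x) ^ 2 else 0) := by
    by_cases hxy : R x y
    · simp [hadj, hxy, hR x y hxy]
    · by_cases hyx : R y x <;> simp [hadj, hxy, hyx, sub_sq_comm]
  simp only [energyForm, hsplit, sum_add_distrib]
  rw [sum_comm (f := fun x y => if R y x then (f y - f x) ^ 2 else 0)]
  ring

lemma sum_mul_degree_eq_zero_of_iso (σ : G ≃g G) (f : V → ℝ) (hf : ∀ x, f (σ x) = -f x) :
    ∑ x, f x * (G.degree x : ℝ) = 0 := by
  have h := σ.bijective.sum_comp (fun x => f x * (G.degree x : ℝ))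
  simp only [hf, Iso.degree_eq, neg_mul, sum_neg_distrib] at h
  linarith

lemma card_sub_one_le_degree_of_pairwise_adj {ι : Type*} [Fintype ι] {e : ι → V}
    (he : Pairwise fun i j => G.Adj (e i) (e j)) (i : ι) :
    Fintype.card ι - 1 ≤ G.degree (e i) := by
  rw [← card_neighborFinset_eq_degree, ← card_univ, ← card_erase_of_mem (mem_univ i)]
  refine card_le_card_of_injOn e (fun j hj => ?_) (fun j _ k _ hjk => ?_)
  · simpa using he (ne_of_mem_erase hj).symm
  · by_contra hne
    exact (he hne).ne hjk

end SimpleGraph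

lemma Fin.sum_sum_ite_val_eq_val_add_one {M : Type*} [AddCommMonoid M] {t : ℕ}
    (g : Fin (t + 1) → Fin (t + 1) → M) :
    ∑ i : Fin (t + 1), ∑ j : Fin (t + 1), (if (j : ℕ) = (i : ℕ) + 1 then g i j else 0) =
      ∑ k : Fin t, g k.castSucc k.succ := by
  simp only [Fin.sum_univ_succ (f := fun j => if (j : ℕ) = _ + 1 then _ else _)]
  simp [Fin.sum_univ_castSucc (f := fun i => ∑ j : Fin t, if (j : ℕ) = i then _ else _),
    Fin.val_inj, fun x : Fin t => x.isLt.ne]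

lemma DKrel.asymm {r s : ℕ} {x y : Fin r ⊕ (Fin s ⊕ Fin r)} :
    DKrel r s x y → ¬DKrel r s y x := by
  rcases x with a | i | b <;> rcases y with a' | i' | b' <;> intro h h' <;>
    simp only [DKrel, Fin.lt_def] at h h' <;> omega

namespace doubleKite

variable {r s : ℕ}

def swapEnds (r s : ℕ) : doubleKite r s ≃g doubleKite r s where
  toFun
    | .inl a => .inr (.inr a)
    | .inr (.inl i) => .inr (.inl i.rev)
    | .inr (.inr b) => .inl b
  invFun
    | .inl a => .inr (.inr a)
    | .inr (.inl i) => .inr (.inl i.rev)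
    | .inr (.inr b) => .inl b
  left_inv := by rintro (a | i | b) <;> simp
  right_inv := by rintro (a | i | b) <;> simp
  map_rel_iff' := by
    rintro (a | i | b) (a' | i' | b') <;>
      simp only [doubleKite, DKrel, Fin.lt_def, Fin.val_rev, Equiv.coe_fn_mk, false_or,
        or_false] <;> omega

def testFn (r s : ℕ) : Fin r ⊕ (Fin s ⊕ Fin r) → ℝ
  | .inl _ => 1
  | .inr (.inl i) => 1 - 2 * ((i : ℝ) + 1) / (s + 1)
  | .inr (.inr _) => -1

lemma testFn_swapEnds (x : Fin r ⊕ (Fin s ⊕ Fin r)) : testFn r s (swapEnds r s x) = -testFn r s x := by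
  rcases x with a | i | b <;> simp [swapEnds, testFn, Fin.val_rev]
  field_simp
  ring

lemma energyForm_testFn [NeZero r] : (doubleKite r s).energyForm (testFn r s) = 4 / (s + 1) := by
  rw [(doubleKite r s).energyForm_eq_sum_of_adj_iff (fun _ _ => DKrel.asymm) fun _ _ => Iff.rfl]
  cases s with
  | zero => norm_num [Fintype.sum_sum_type, DKrel, testFn, ite_and]
  | succ t =>
    have hlast (x : Fin (t + 1)) : (x : ℕ) = t ↔ x = Fin.last t := by simp [Fin.ext_iff]
    have hstep (x : ℝ) :
        2 * (x + 1 + 1) / (t + 1 + 1) - 2 * (x + 1) / (t + 1 + 1) = 2 / (t + 1 + 1) := by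
      ring
    simp [Fintype.sum_sum_type, DKrel, testFn, ite_and, Fin.sum_sum_ite_val_eq_val_add_one,
      hlast, sum_add_distrib, hstep]
    field_simp
    ring

lemma sub_one_le_degree_inl (a : Fin r) : r - 1 ≤ (doubleKite r s).degree (.inl a) := by
  simpa using (doubleKite r s).card_sub_one_le_degree_of_pairwise_adj
    (e := Sum.inl) (fun a b hab => hab.lt_or_gt) a

lemma sub_one_le_degree_inr_inr (b : Fin r) :
    r - 1 ≤ (doubleKite r s).degree (.inr (.inr b)) := by
  simpa using (doubleKite r s).card_sub_one_le_degree_of_pairwise_adj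
    (e := fun b => .inr (.inr b)) (fun a b hab => hab.lt_or_gt) b

lemma le_qForm_testFn : 2 * r * (r - 1 : ℝ) ≤ (doubleKite r s).qForm (testFn r s) := by
  have hdeg (x : Fin r ⊕ (Fin s ⊕ Fin r)) (hx : r - 1 ≤ (doubleKite r s).degree x) :
      (r - 1 : ℝ) ≤ (doubleKite r s).degree x := by
    have : r ≤ (doubleKite r s).degree x + 1 := by omega
    have : (r : ℝ) ≤ (doubleKite r s).degree x + 1 := by exact_mod_cast this
    linarith
  have hpath : 0 ≤ ∑ i : Fin s, testFn r s (.inr (.inl i)) ^ 2 *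
      ((doubleKite r s).degree (.inr (.inl i)) : ℝ) := by positivity
  have hclique1 := sum_le_sum fun a (_ : a ∈ univ) => hdeg (.inl a) (sub_one_le_degree_inl a)
  have hclique2 := sum_le_sum fun b (_ : b ∈ univ) =>
    hdeg (.inr (.inr b)) (sub_one_le_degree_inr_inr b)
  simp only [sum_const, card_univ, Fintype.card_fin, nsmul_eq_mul] at hclique1 hclique2
  simp only [SimpleGraph.qForm, Fintype.sum_sum_type, testFn.eq_1, testFn.eq_3]
  norm_num
  linarith

theorem lambda1_le (hr : 2 ≤ r) :
    (doubleKite r s).lambda1 ≤ 2 / ((s + 1) * r * (r - 1)) := by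
  have : NeZero r := ⟨by omega⟩
  have hr' : (2 : ℝ) ≤ r := by exact_mod_cast hr
  have hpos : 0 < 2 * r * (r - 1 : ℝ) := by nlinarith
  have hq := le_qForm_testFn (r := r) (s := s)
  have hanti := (doubleKite r s).sum_mul_degree_eq_zero_of_iso (swapEnds r s) _ testFn_swapEnds
  calc (doubleKite r s).lambda1
      ≤ (doubleKite r s).energyForm (testFn r s) / (doubleKite r s).qForm (testFn r s) :=
        (doubleKite r s).lambda1_le_energyForm_div_qForm _ hanti (hpos.trans_le hq).ne'
    _ ≤ 4 / (s + 1) / (2 * r * (r - 1)) := by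
        rw [energyForm_testFn]
        gcongr
    _ = 2 / ((s + 1) * r * (r - 1)) := by
        field_simp
        ring

end doubleKite

lemma pow_three_le_one_add_mul_sub_five_pow_three {x ε : ℝ} (hx : 10 ≤ x) (hεx : 120 ≤ ε * x) :
    x ^ 3 ≤ (1 + ε) * (x - 5) ^ 3 := by
  have hε : 0 ≤ ε := by nlinarith
  have hhalf : (x / 2) ^ 3 ≤ (x - 5) ^ 3 := by gcongr; linarith
  calc x ^ 3 ≤ (x - 5) ^ 3 + 15 * x ^ 2 := by nlinarith
    _ ≤ (x - 5) ^ 3 + ε * (x / 2) ^ 3 := by nlinarith [sq_nonneg x]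
    _ ≤ (1 + ε) * (x - 5) ^ 3 := by nlinarith [mul_le_mul_of_nonneg_left hhalf hε]

lemma two_div_le_of_sub_five_le {x ε a b : ℝ} (hx : 10 ≤ x) (hεx : 120 ≤ ε * x)
    (ha : x - 5 ≤ 3 * a) (hb : x - 2 ≤ 3 * b) :
    2 / (a * b * (b - 1)) ≤ (1 + ε) * (54 / x ^ 3) := by
  have hy : 0 < (x - 5) / 3 := by linarith
  have hprod : (x - 5) / 3 * ((x - 5) / 3) * ((x - 5) / 3) ≤ a * b * (b - 1) :=
    mul_le_mul (mul_le_mul (by linarith) (by linarith) hy.le (by linarith)) (by linarith) hy.le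
      (mul_pos (by linarith) (by linarith)).le
  calc 2 / (a * b * (b - 1)) ≤ 2 / ((x - 5) / 3 * ((x - 5) / 3) * ((x - 5) / 3)) := by gcongr
    _ = 54 / (x - 5) ^ 3 := by
        field_simp
        ring
    _ ≤ (1 + ε) * (54 / x ^ 3) := by
        rw [mul_div_assoc', div_le_div_iff₀ (pow_pos (by linarith) 3) (by positivity)]
        nlinarith [pow_three_le_one_add_mul_sub_five_pow_three hx hεx]

/-- The double kite graph `DK(⌊n/3⌋, n - 2⌊n/3⌋ - 2)` has normalized Laplacian spectral gap
at most `(1+o(1))·54/n³`. -/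
theorem doubleKite_lambda1_le : ∀ ε : ℝ, 0 < ε → ∃ N : ℕ, ∀ n : ℕ, N ≤ n →
    (doubleKite (n / 3) (n - 2 * (n / 3) - 2)).lambda1 ≤ (1 + ε) * (54 / (n : ℝ)^3) := by
  intro ε hε
  refine ⟨max 10 ⌈120 / ε⌉₊, fun n hn => ?_⟩
  have h10 : 10 ≤ n := le_of_max_le_left hn
  have hεn : 120 ≤ ε * n := by
    have h := (Nat.le_ceil (120 / ε)).trans (Nat.cast_le.2 (le_of_max_le_right hn))
    rwa [div_le_iff₀' hε] at h
  have hs : n ≤ 3 * (n - 2 * (n / 3) - 2) + 8 := by omega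
  have hr : n ≤ 3 * (n / 3) + 2 := by omega
  refine (doubleKite.lambda1_le (by omega)).trans (two_div_le_of_sub_five_le
    (by exact_mod_cast h10) hεn ?_ ?_)
  · have : (n : ℝ) ≤ 3 * (n - 2 * (n / 3) - 2 : ℕ) + 8 := by exact_mod_cast hs
    linarith
  · have : (n : ℝ) ≤ 3 * (n / 3 : ℕ) + 2 := by exact_mod_cast hr
    linarith
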